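/- Let A be a commutative unital algebra of bounded operators on a Hilbert space H possessing a rationally strictly cyclic vector h₀, and let D ⊆ H be a dense linear manifold invariant under A. Then the intersection of the kernels ker T, over all T ∈ A with T h₀ ∈ D, equals {0}. -/
import Mathlib


/-- `h₀` is a rationally strictly cyclic vector for the algebra `A`: for every `h` there
are `A₁, B ∈ A` with `B h = A₁ h₀` and `ker B = {0}`. -/
def RatStrictCyclic {H : Type*} [NormedAddCommGroup H] [InnerProductSpace ℂ H]
    (A : Subalgebra ℂ (H →L[ℂ] H)) (h₀ : H) : Prop :=
  ∀ h : H, ∃ A₁ ∈ A, ∃ B ∈ A, Function.Injective B ∧ B h = A₁ h₀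

/-- An algebra of operators is confluent if any two nonzero vectors can be matched by
injective operators from the algebra. -/
def ConfluentOn {H : Type*} [NormedAddCommGroup H] [InnerProductSpace ℂ H]
    (A : Set (H →L[ℂ] H)) : Prop :=
  ∀ h₁ h₂ : H, h₁ ≠ 0 → h₂ ≠ 0 →
    ∃ B₁ ∈ A, ∃ B₂ ∈ A, Function.Injective B₁ ∧ Function.Injective B₂ ∧ B₁ h₁ = B₂ h₂

/-- If A is a commutative unital algebra with a rationally strictly cyclic
vector h₀ and D is a dense A-invariant linear manifold, then
⋂ {ker T : T ∈ A, T h₀ ∈ D} = {0}. -/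
theorem stmt7 {H : Type*} [NormedAddCommGroup H] [InnerProductSpace ℂ H] [CompleteSpace H]
    (A : Subalgebra ℂ (H →L[ℂ] H))
    (hcomm : ∀ T₁ ∈ A, ∀ T₂ ∈ A, T₁ * T₂ = T₂ * T₁)
    (h₀ : H) (hrsc : RatStrictCyclic A h₀)
    (D : Submodule ℂ H) (hDdense : Dense (D : Set H))
    (hDinv : ∀ T ∈ A, ∀ x ∈ D, T x ∈ D) :
    ∀ h : H, (∀ T ∈ A, T h₀ ∈ D → T h = 0) → h = 0 := by
  intro h hh
  by_contra hne
  obtain ⟨C, hC, B, hB, hBinj, hBh⟩ := hrsc h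
  have hBh0 : B h ≠ 0 := fun e => hne (hBinj (e.trans (map_zero B).symm))
  have hCd : ∀ d ∈ D, C d = 0 := by
    intro d hd
    obtain ⟨A₁, hA1, B', hB', hB'inj, hB'd⟩ := hrsc d
    have hA1h₀D : A₁ h₀ ∈ D := hB'd ▸ hDinv B' hB' d hd
    have hA1h : A₁ h = 0 := hh A₁ hA1 hA1h₀D
    apply hB'inj
    have e1 := ContinuousLinearMap.ext_iff.mp (hcomm B' hB' C hC) d
    have e2 := ContinuousLinearMap.ext_iff.mp (hcomm C hC A₁ hA1) h₀
    have e3 := ContinuousLinearMap.ext_iff.mp (hcomm A₁ hA1 B hB) h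
    simp only [ContinuousLinearMap.mul_apply] at e1 e2 e3
    calc B' (C d) = C (B' d) := e1
      _ = C (A₁ h₀) := by rw [hB'd]
      _ = A₁ (C h₀) := e2
      _ = A₁ (B h) := by rw [hBh]
      _ = B (A₁ h) := e3
      _ = 0 := by rw [hA1h, map_zero]
      _ = B' 0 := (map_zero B').symm
  have hC0 : C h₀ = 0 := by
    have : (C : H → H) = (0 : H →L[ℂ] H) :=
      Continuous.ext_on hDdense C.continuous (ContinuousLinearMap.continuous _)
        (fun d hd => by simpa using hCd d hd)
    exact congrFun this h₀
  exact hBh0 (hBh.trans hC0)
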